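/- Substitution of domains commutes with fusion of local types: for any local types T1, T2, domain variable α, and domain ω with α not bound in T1 or T2, (T1 ⋈ T2){ω/α} = (T1{ω/α}) ⋈ (T2{ω/α}). -/

import Mathlib

/-- Local types T ::= end | base B | p?{lᵢ⟨Uᵢ⟩.Tᵢ} | p!{lᵢ⟨Uᵢ⟩.Tᵢ} | ∀α.T | ∃α.T | @_ω T | ↓α.T.
Payload types U (base types or local types) are embedded via `base`; a branch is a
triple (label, payload, continuation). -/
inductive LocalTy where
  | endT : LocalTy
  | base : String → LocalTy
  | recv : String → List (String × LocalTy × LocalTy) → LocalTy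
  | send : String → List (String × LocalTy × LocalTy) → LocalTy
  | all  : String → LocalTy → LocalTy
  | ex   : String → LocalTy → LocalTy
  | att  : String → LocalTy → LocalTy
  | here : String → LocalTy → LocalTy

mutual
/-- Fusion T1 ⋈ T2: end ⋈ T = T, and otherwise T2 is pushed under the outermost
constructor of T1, recursing into every continuation. -/
def fuse : LocalTy → LocalTy → LocalTy
  | .endT, T => T
  | .base b, _ => .base b
  | .recv p bs, T => .recv p (fuseBrs bs T)
  | .send p bs, T => .send p (fuseBrs bs T)
  | .all a S, T => .all a (fuse S T)
  | .ex a S, T => .ex a (fuse S T)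
  | .att w S, T => .att w (fuse S T)
  | .here a S, T => .here a (fuse S T)

def fuseBrs : List (String × LocalTy × LocalTy) → LocalTy → List (String × LocalTy × LocalTy)
  | [], _ => []
  | (l, U, S) :: bs, T => (l, U, fuse S T) :: fuseBrs bs T
end

mutual
/-- Domain substitution T{ω/α}: replace free occurrences of the domain variable α
by ω (substitution stops under binders ∀α, ∃α, ↓α that rebind α). -/
def substT (α ω : String) : LocalTy → LocalTy
  | .endT => .endT
  | .base b => .base b
  | .recv p bs => .recv p (substBrs α ω bs)
  | .send p bs => .send p (substBrs α ω bs)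
  | .all a T => if a = α then .all a T else .all a (substT α ω T)
  | .ex a T => if a = α then .ex a T else .ex a (substT α ω T)
  | .att w T => .att (if w = α then ω else w) (substT α ω T)
  | .here a T => if a = α then .here a T else .here a (substT α ω T)

def substBrs (α ω : String) : List (String × LocalTy × LocalTy) → List (String × LocalTy × LocalTy)
  | [] => []
  | (l, U, S) :: bs => (l, substT α ω U, substT α ω S) :: substBrs α ω bs
end

/-- `BoundIn α T`: the domain variable α occurs bound (by ∀, ∃ or ↓) somewhere in T. -/
inductive BoundIn (α : String) : LocalTy → Prop where
  | allHead (T) : BoundIn α (.all α T)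
  | exHead (T) : BoundIn α (.ex α T)
  | hereHead (T) : BoundIn α (.here α T)
  | allIn {a T} : BoundIn α T → BoundIn α (.all a T)
  | exIn {a T} : BoundIn α T → BoundIn α (.ex a T)
  | hereIn {a T} : BoundIn α T → BoundIn α (.here a T)
  | attIn {w T} : BoundIn α T → BoundIn α (.att w T)
  | recvPay {p bs l U S} : (l, U, S) ∈ bs → BoundIn α U → BoundIn α (.recv p bs)
  | recvCont {p bs l U S} : (l, U, S) ∈ bs → BoundIn α S → BoundIn α (.recv p bs)
  | sendPay {p bs l U S} : (l, U, S) ∈ bs → BoundIn α U → BoundIn α (.send p bs)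
  | sendCont {p bs l U S} : (l, U, S) ∈ bs → BoundIn α S → BoundIn α (.send p bs)


lemma substBrs_fuseBrs (α ω : String) (T2 : LocalTy) :
    ∀ bs : List (String × LocalTy × LocalTy),
      (∀ l U S, (l, U, S) ∈ bs →
        substT α ω (fuse S T2) = fuse (substT α ω S) (substT α ω T2)) →
      substBrs α ω (fuseBrs bs T2) = fuseBrs (substBrs α ω bs) (substT α ω T2) := by
  intro bs
  induction bs with
  | nil => intro _; simp [fuseBrs, substBrs]
  | cons b bs ih =>
    intro h
    obtain ⟨l, U, S⟩ := b
    simp only [fuseBrs, substBrs]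
    rw [h l U S List.mem_cons_self, ih (fun l' U' S' hm => h l' U' S' (List.mem_cons_of_mem _ hm))]

lemma sizeOf_lt_of_mem_brs {l : String} {U S : LocalTy} {bs : List (String × LocalTy × LocalTy)}
    (h : (l, U, S) ∈ bs) : sizeOf S < sizeOf bs := by
  have := List.sizeOf_lt_of_mem h
  simp only [Prod.mk.sizeOf_spec] at this
  omega

lemma subst_fuse_aux (α ω : String) (T2 : LocalTy) :
    ∀ n (T1 : LocalTy), sizeOf T1 ≤ n → ¬ BoundIn α T1 →
      substT α ω (fuse T1 T2) = fuse (substT α ω T1) (substT α ω T2) := by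
  intro n
  induction n with
  | zero =>
    intro T1 hs _
    cases T1 <;> simp_all
  | succ n ih =>
    intro T1 hs h1
    cases T1 with
    | endT => simp [fuse, substT]
    | base b => simp [fuse, substT]
    | recv p bs =>
      simp only [fuse, substT]
      rw [substBrs_fuseBrs]
      intro l U S hm
      have hsz : sizeOf S ≤ n := by
        have := sizeOf_lt_of_mem_brs hm
        simp only [LocalTy.recv.sizeOf_spec] at hs
        omega
      exact ih S hsz (fun hb => h1 (BoundIn.recvCont hm hb))
    | send p bs =>
      simp only [fuse, substT]
      rw [substBrs_fuseBrs]
      intro l U S hm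
      have hsz : sizeOf S ≤ n := by
        have := sizeOf_lt_of_mem_brs hm
        simp only [LocalTy.send.sizeOf_spec] at hs
        omega
      exact ih S hsz (fun hb => h1 (BoundIn.sendCont hm hb))
    | all a T =>
      have hne : a ≠ α := fun h => h1 (h ▸ BoundIn.allHead T)
      have hsz : sizeOf T ≤ n := by simp only [LocalTy.all.sizeOf_spec] at hs; omega
      simp only [fuse, substT, if_neg hne]
      rw [ih T hsz (fun hb => h1 (BoundIn.allIn hb))]
    | ex a T =>
      have hne : a ≠ α := fun h => h1 (h ▸ BoundIn.exHead T)
      have hsz : sizeOf T ≤ n := by simp only [LocalTy.ex.sizeOf_spec] at hs; omega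
      simp only [fuse, substT, if_neg hne]
      rw [ih T hsz (fun hb => h1 (BoundIn.exIn hb))]
    | att w T =>
      have hsz : sizeOf T ≤ n := by simp only [LocalTy.att.sizeOf_spec] at hs; omega
      simp only [fuse, substT]
      rw [ih T hsz (fun hb => h1 (BoundIn.attIn hb))]
    | here a T =>
      have hne : a ≠ α := fun h => h1 (h ▸ BoundIn.hereHead T)
      have hsz : sizeOf T ≤ n := by simp only [LocalTy.here.sizeOf_spec] at hs; omega
      simp only [fuse, substT, if_neg hne]
      rw [ih T hsz (fun hb => h1 (BoundIn.hereIn hb))]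

/-- substitution of domains commutes with fusion: if α is not bound
in T1 or T2, then (T1 ⋈ T2){ω/α} = (T1{ω/α}) ⋈ (T2{ω/α}). -/
theorem subst_fuse (T1 T2 : LocalTy) (α ω : String)
    (h1 : ¬ BoundIn α T1) (h2 : ¬ BoundIn α T2) :
    substT α ω (fuse T1 T2) = fuse (substT α ω T1) (substT α ω T2) := by
  exact subst_fuse_aux α ω T2 (sizeOf T1) T1 le_rfl h1
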